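/- Every finitely generated projective module over the ring R₁ = ℝ[X,Y]/(X²+Y²+1) is free. -/

import Mathlib

noncomputable section

/-- The coordinate ring `R₁ = ℝ[X,Y]/(X²+Y²+1)` of the affine open `U₁ = D₊(z)` of the
real anisotropic conic `C = V(x²+y²+z²) ⊂ ℙ²_ℝ`. -/
def R1 : Type :=
  MvPolynomial (Fin 2) ℝ ⧸
    Ideal.span {(MvPolynomial.X 0 : MvPolynomial (Fin 2) ℝ) ^ 2 + MvPolynomial.X 1 ^ 2 + 1}

instance : CommRing R1 := Ideal.Quotient.commRing _

open Polynomial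

namespace ConicAux

abbrev B : Type := Polynomial ℝ
def cc : B := X ^ 2 + 1
def q : Polynomial B := X ^ 2 + C cc
lemma q_monic : q.Monic := monic_X_pow_add_C _ (by norm_num)
abbrev A : Type := AdjoinRoot q
lemma root_rel : (AdjoinRoot.root q) ^ 2 + algebraMap B A cc = 0 := by
  have h := AdjoinRoot.mk_self (f := q)
  rw [show q = X ^ 2 + C cc from rfl] at h
  simp [map_add, map_pow, AdjoinRoot.mk_X, AdjoinRoot.mk_C, AdjoinRoot.algebraMap_eq] at h
  rw [AdjoinRoot.algebraMap_eq]; exact h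

lemma helper (P : Ideal A) (hP : P.IsPrime) (π : B) (hπirr : Irreducible π)
    (t : B) (s0 : ℝ) (hs0 : s0 ≠ 0) (hts : t ^ 2 + cc = π * C s0)
    (hmem : AdjoinRoot.root q - algebraMap B A t ∈ P) : P.IsPrincipal := by
  haveI hmax : (Ideal.span {π}).IsMaximal := PrincipalIdealRing.isMaximal_of_irreducible hπirr
  letI : Field (B ⧸ Ideal.span {π}) := Ideal.Quotient.field _
  set Θ : A := AdjoinRoot.root q with hΘ
  set T : A := algebraMap B A t with hT
  set g : A := Θ - T with hg
  -- the evaluation condition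
  have hqt : q.eval t = t ^ 2 + cc := by simp [q]
  have hmemspan : t ^ 2 + cc ∈ Ideal.span {π} := by
    rw [hts]; exact Ideal.mem_span_singleton.mpr ⟨C s0, rfl⟩
  have hev : q.eval₂ (Ideal.Quotient.mk (Ideal.span {π})) (Ideal.Quotient.mk _ t) = 0 := by
    rw [eval₂_at_apply, hqt, Ideal.Quotient.eq_zero_iff_mem]
    exact hmemspan
  set φ : A →+* B ⧸ Ideal.span {π} :=
    AdjoinRoot.lift (Ideal.Quotient.mk (Ideal.span {π})) (Ideal.Quotient.mk _ t) hev with hφ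
  have hφ_of : ∀ b : B, φ (algebraMap B A b) = Ideal.Quotient.mk _ b := by
    intro b
    rw [AdjoinRoot.algebraMap_eq, hφ, AdjoinRoot.lift_of]
  have hφ_mk : ∀ f : Polynomial B, φ (AdjoinRoot.mk q f) = Ideal.Quotient.mk _ (f.eval t) := by
    intro f
    rw [hφ, AdjoinRoot.lift_mk, eval₂_at_apply]
  have hsurj : Function.Surjective φ := by
    intro k
    obtain ⟨b, rfl⟩ := Ideal.Quotient.mk_surjective k
    exact ⟨algebraMap B A b, hφ_of b⟩
  have hφg : φ g = 0 := by
    rw [hg, map_sub, hT, hφ_of, hΘ, hφ, AdjoinRoot.lift_root, sub_self]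
  -- π is in the span of g
  have hΘsq : Θ ^ 2 = -(algebraMap B A cc) := by
    have := root_rel
    rw [← hΘ] at this
    exact eq_neg_of_add_eq_zero_left this
  have key : g * (Θ + T) = -(algebraMap B A π * algebraMap B A (C s0)) := by
    calc g * (Θ + T) = Θ ^ 2 - T ^ 2 := by rw [hg]; ring
    _ = -(algebraMap B A cc) - algebraMap B A (t ^ 2) := by rw [hΘsq, hT, map_pow]
    _ = -(algebraMap B A (t ^ 2 + cc)) := by rw [map_add]; ring
    _ = -(algebraMap B A π * algebraMap B A (C s0)) := by rw [← map_mul, hts]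
  have hcinv : algebraMap B A (C s0) * algebraMap B A (C s0⁻¹) = 1 := by
    rw [← map_mul, ← C_mul, mul_inv_cancel₀ hs0, C_1, map_one]
  have hπg : algebraMap B A π = g * (-(Θ + T) * algebraMap B A (C s0⁻¹)) := by
    calc algebraMap B A π
        = algebraMap B A π * (algebraMap B A (C s0) * algebraMap B A (C s0⁻¹)) := by
          rw [hcinv, mul_one]
      _ = -(g * (Θ + T)) * algebraMap B A (C s0⁻¹) := by rw [key]; ring
      _ = g * (-(Θ + T) * algebraMap B A (C s0⁻¹)) := by ring
  have hπspan : algebraMap B A π ∈ Ideal.span {g} := Ideal.mem_span_singleton.mpr ⟨_, hπg⟩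
  -- kernel of φ equals span {g}
  have hker : RingHom.ker φ = Ideal.span {g} := by
    apply le_antisymm
    · intro a ha
      obtain ⟨f, rfl⟩ := AdjoinRoot.mk_surjective a
      have hdiv : f %ₘ (X - C t) + (X - C t) * (f /ₘ (X - C t)) = f :=
        modByMonic_add_div f (X - C t)
      have hmod : f %ₘ (X - C t) = C (f.eval t) := modByMonic_X_sub_C_eq_C_eval f t
      have hevalmem : f.eval t ∈ Ideal.span {π} := by
        rw [← Ideal.Quotient.eq_zero_iff_mem, ← hφ_mk]
        exact ha
      obtain ⟨w, hw⟩ := Ideal.mem_span_singleton.mp hevalmem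
      have hrw : AdjoinRoot.mk q f
          = algebraMap B A (f.eval t) + g * AdjoinRoot.mk q (f /ₘ (X - C t)) := by
        conv_lhs => rw [← hdiv]
        rw [hmod, map_add, map_mul, map_sub, AdjoinRoot.mk_X, AdjoinRoot.mk_C,
          AdjoinRoot.mk_C, ← AdjoinRoot.algebraMap_eq, hg, hΘ, hT]
      rw [hrw]
      apply Ideal.add_mem
      · rw [hw, map_mul]
        exact Ideal.mul_mem_right _ _ hπspan
      · exact Ideal.mul_mem_right _ _ (Ideal.mem_span_singleton_self g)
    · rw [Ideal.span_le, Set.singleton_subset_iff]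
      exact hφg
  have hgmax : (Ideal.span {g}).IsMaximal := hker ▸ RingHom.ker_isMaximal_of_surjective φ hsurj
  have hle : Ideal.span {g} ≤ P := by
    rw [Ideal.span_le, Set.singleton_subset_iff]; exact hmem
  exact ⟨g, (hgmax.eq_of_le hP.ne_top hle).symm⟩


lemma irred_natDegree_le_two {p : Polynomial ℝ} (h : Irreducible p) : p.natDegree ≤ 2 := by
  have h0 : p ≠ 0 := h.ne_zero
  have hd : 0 < (p.map (algebraMap ℝ ℂ)).degree := by
    rw [degree_map]; exact degree_pos_of_irreducible h
  obtain ⟨z, hz⟩ := Complex.exists_root hd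
  have haev : Polynomial.aeval z p = 0 := by
    rwa [Polynomial.aeval_def, ← Polynomial.eval_map]
  have hint : IsIntegral ℝ z := IsIntegral.of_finite ℝ z
  obtain ⟨u, hu⟩ := minpoly.dvd ℝ z haev
  have hmz : minpoly ℝ z ≠ 0 := minpoly.ne_zero hint
  have hu0 : u ≠ 0 := by rintro rfl; rw [mul_zero] at hu; exact h0 hu
  rcases h.isUnit_or_isUnit hu with h1 | h1
  · exact absurd h1 (minpoly.not_isUnit ℝ z)
  · have heq : p.natDegree = (minpoly ℝ z).natDegree + u.natDegree := by
      rw [hu, natDegree_mul hmz hu0]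
    rw [heq, natDegree_eq_zero_of_isUnit h1, add_zero]
    calc (minpoly ℝ z).natDegree ≤ Module.finrank ℝ ℂ := minpoly.natDegree_le z
      _ = 2 := Complex.finrank_real_complex

instance qdom : IsDomain A :=
  AdjoinRoot.isDomain_of_prime (by
    have : Irreducible q := by
      rw [q_monic.irreducible_iff_roots_eq_zero_of_degree_le_three
        (by rw [show q = X ^ 2 + C cc from rfl, natDegree_X_pow_add_C])
        (by rw [show q = X ^ 2 + C cc from rfl, natDegree_X_pow_add_C]; norm_num)]
      rw [Multiset.eq_zero_iff_forall_notMem]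
      intro r hr
      rw [mem_roots q_monic.ne_zero] at hr
      have h : r ^ 2 + cc = 0 := by simpa [q, IsRoot] using hr
      have h0 := congrArg (Polynomial.eval (0 : ℝ)) h
      simp [cc] at h0
      nlinarith [sq_nonneg (r.eval 0), h0]
    exact this.prime)

instance : Module.Finite B A := Module.Finite.of_basis (AdjoinRoot.powerBasis' q_monic).basis

theorem prime_principal (P : Ideal A) (hP : P.IsPrime) : P.IsPrincipal := by
  by_cases hbot : P = ⊥
  · rw [hbot]; exact ⟨0, Ideal.span_zero.symm⟩
  obtain ⟨x, hxP, hx0⟩ := Submodule.exists_mem_ne_zero_of_ne_bot hbot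
  have hcomap : P.comap (algebraMap B A) ≠ ⊥ :=
    Ideal.comap_ne_bot_of_integral_mem hx0 hxP (IsIntegral.of_finite B x)
  haveI hpprime : (P.comap (algebraMap B A)).IsPrime := hP.comap _
  obtain ⟨g0, hg0span⟩ := (IsPrincipalIdealRing.principal (P.comap (algebraMap B A))).principal
  have hg0ne : g0 ≠ 0 := by
    rintro rfl
    exact hcomap (hg0span.trans (Submodule.span_zero_singleton B))
  set π : B := g0 * C (g0.leadingCoeff)⁻¹ with hπdef
  have hπmonic : π.Monic := monic_mul_leadingCoeff_inv hg0ne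
  have hassoc : Associated g0 π := by
    have hu : IsUnit (C (g0.leadingCoeff)⁻¹ : B) :=
      Polynomial.isUnit_C.mpr
        ((inv_ne_zero (leadingCoeff_ne_zero.mpr hg0ne)).isUnit)
    exact ⟨hu.unit, by rw [IsUnit.unit_spec]⟩
  have hspan : P.comap (algebraMap B A) = Ideal.span {π} := by
    rw [hg0span]
    exact Ideal.span_singleton_eq_span_singleton.mpr hassoc
  have hπ0 : π ≠ 0 := hπmonic.ne_zero
  have hπprime : Prime π := (Ideal.span_singleton_prime hπ0).mp (hspan ▸ hpprime)
  have hπirr : Irreducible π := hπprime.irreducible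
  have hπP : algebraMap B A π ∈ P := by
    have hπmem : π ∈ P.comap (algebraMap B A) := by
      rw [hspan]; exact Ideal.mem_span_singleton_self π
    exact Ideal.mem_comap.mp hπmem
  by_cases hex : ∃ t0 : B, t0 ^ 2 + cc ∈ Ideal.span {π}
  · obtain ⟨t0, ht0⟩ := hex
    set t : B := t0 %ₘ π with htdef
    have htmem : t ^ 2 + cc ∈ Ideal.span {π} := by
      have hmm : t0 - t ∈ Ideal.span {π} := by
        rw [htdef, modByMonic_eq_sub_mul_div t0 π]
        rw [sub_sub_cancel]
        exact Ideal.mem_span_singleton.mpr ⟨t0 /ₘ π, rfl⟩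
      have : t ^ 2 + cc - (t0 ^ 2 + cc) = (t - t0) * (t + t0) := by ring
      have h2 : t ^ 2 + cc - (t0 ^ 2 + cc) ∈ Ideal.span {π} := by
        rw [this]
        exact Ideal.mul_mem_right _ _ (by
          have := Submodule.neg_mem _ hmm
          simpa using this)
      have h3 := Ideal.add_mem _ h2 ht0
      rwa [sub_add_cancel] at h3
    have hdegt : t.natDegree ≤ 1 := by
      by_cases ht00 : t = 0
      · rw [ht00]; simp
      have h1 : t.degree < π.degree := by
        rw [htdef]; exact degree_modByMonic_lt t0 hπmonic
      have h2 : π.natDegree ≤ 2 := irred_natDegree_le_two hπirr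
      have h3 : π.degree ≤ 2 := by
        rw [degree_eq_natDegree hπ0]; exact_mod_cast h2
      have h4 : t.natDegree < 2 := by
        rw [← Nat.cast_lt (α := WithBot ℕ), ← degree_eq_natDegree ht00]
        exact lt_of_lt_of_le h1 h3
      omega
    have hrep : t = C (t.coeff 1) * X + C (t.coeff 0) := eq_X_add_C_of_natDegree_le_one hdegt
    have hdeq : (t ^ 2 + cc).natDegree = 2 := by
      rw [hrep, cc]
      compute_degree!
      nlinarith [sq_nonneg (t.coeff 1)]
    have hne : t ^ 2 + cc ≠ 0 := by
      intro h
      rw [h] at hdeq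
      simp at hdeq
    obtain ⟨s, hs⟩ := Ideal.mem_span_singleton.mp htmem
    have hsne : s ≠ 0 := by rintro rfl; rw [mul_zero] at hs; exact hne hs
    have hsum : 2 = π.natDegree + s.natDegree := by
      rw [← hdeq, hs, natDegree_mul hπ0 hsne]
    have hπpos : 0 < π.natDegree :=
      natDegree_pos_iff_degree_pos.mpr (degree_pos_of_irreducible hπirr)
    have hπ2 : π.natDegree = 2 := by
      rcases Nat.lt_or_ge π.natDegree 2 with hlt | hge
      · exfalso
        have hd1 : π.natDegree = 1 := by omega
        have hc1 : π.coeff 1 = 1 := by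
          have := hπmonic.coeff_natDegree
          rwa [hd1] at this
        have hπrep : π = C 1 * X + C (π.coeff 0) := by
          rw [← hc1]
          exact eq_X_add_C_of_natDegree_le_one (by omega)
        have h0 := congrArg (Polynomial.eval (-(π.coeff 0))) hs
        rw [hπrep] at h0
        simp [cc] at h0
        nlinarith [sq_nonneg (Polynomial.eval (-(π.coeff 0)) t), sq_nonneg (π.coeff 0), h0]
      · omega
    have hsdeg : s.natDegree = 0 := by omega
    have hsrep : s = C (s.coeff 0) := eq_C_of_natDegree_eq_zero hsdeg
    have hs00 : s.coeff 0 ≠ 0 := by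
      intro h
      rw [hsrep, h, C_0] at hsne
      exact hsne rfl
    have hts : t ^ 2 + cc = π * C (s.coeff 0) := by rw [hs]; exact congrArg (fun z => π * z) hsrep
    -- the product of the two candidate generators lies in P
    have hprod : (AdjoinRoot.root q - algebraMap B A t) *
        (AdjoinRoot.root q - algebraMap B A (-t)) ∈ P := by
      have hΘsq : (AdjoinRoot.root q) ^ 2 = -(algebraMap B A cc) :=
        eq_neg_of_add_eq_zero_left root_rel
      have hcalc : (AdjoinRoot.root q - algebraMap B A t) *
          (AdjoinRoot.root q - algebraMap B A (-t)) = -(algebraMap B A (t ^ 2 + cc)) := by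
        rw [map_neg, sub_neg_eq_add]
        calc (AdjoinRoot.root q - algebraMap B A t) * (AdjoinRoot.root q + algebraMap B A t)
            = (AdjoinRoot.root q) ^ 2 - (algebraMap B A t) ^ 2 := by ring
          _ = -(algebraMap B A cc) - algebraMap B A (t ^ 2) := by rw [hΘsq, map_pow]
          _ = -(algebraMap B A (t ^ 2 + cc)) := by rw [map_add]; ring
      rw [hcalc, hts, map_mul]
      exact Submodule.neg_mem _ (Ideal.mul_mem_right _ _ hπP)
    rcases hP.mem_or_mem hprod with h | h
    · exact helper P hP π hπirr t (s.coeff 0) hs00 hts h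
    · refine helper P hP π hπirr (-t) (s.coeff 0) hs00 ?_ h
      rw [neg_pow, show ((-1:B)^2) = 1 by ring]
      simpa using hts
  · -- no square root mod π : the ideal π·A is maximal
    have hmax : (Ideal.span {π}).IsMaximal := PrincipalIdealRing.isMaximal_of_irreducible hπirr
    letI : Field (B ⧸ Ideal.span {π}) := Ideal.Quotient.field _
    set qbar : Polynomial (B ⧸ Ideal.span {π}) :=
      q.map (Ideal.Quotient.mk (Ideal.span {π})) with hqbar
    have hqbar_eq : qbar = X ^ 2 + C (Ideal.Quotient.mk (Ideal.span {π}) cc) := by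
      rw [hqbar, show q = X ^ 2 + C cc from rfl]
      simp
    have hqbardeg : qbar.natDegree = 2 := by rw [hqbar_eq]; exact natDegree_X_pow_add_C
    have hqbar0 : qbar ≠ 0 := by
      intro h; rw [h] at hqbardeg; simp at hqbardeg
    have hqirr : Irreducible qbar := by
      rw [irreducible_iff_roots_eq_zero_of_degree_le_three (by omega) (by omega)]
      rw [Multiset.eq_zero_iff_forall_notMem]
      intro r hr
      rw [mem_roots hqbar0] at hr
      obtain ⟨t0, rfl⟩ := Ideal.Quotient.mk_surjective r
      have hz : Ideal.Quotient.mk (Ideal.span {π}) (t0 ^ 2 + cc) = 0 := by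
        rw [IsRoot, hqbar_eq] at hr
        simpa [map_add, map_pow] using hr
      exact hex ⟨t0, Ideal.Quotient.eq_zero_iff_mem.mp hz⟩
    have hqmax : (Ideal.span {qbar}).IsMaximal :=
      PrincipalIdealRing.isMaximal_of_irreducible hqirr
    letI : Field (Polynomial (B ⧸ Ideal.span {π}) ⧸ Ideal.span {qbar}) := Ideal.Quotient.field _
    have e := AdjoinRoot.quotAdjoinRootEquivQuotPolynomialQuot (Ideal.span {π}) q
    have hIsF : IsField (A ⧸ (Ideal.span {π}).map (AdjoinRoot.of q)) :=
      e.toMulEquiv.isField (Field.toIsField _)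
    have hMmax : ((Ideal.span {π}).map (AdjoinRoot.of q)).IsMaximal :=
      Ideal.Quotient.maximal_of_isField _ hIsF
    have hle : (Ideal.span {π}).map (AdjoinRoot.of q) ≤ P := by
      rw [Ideal.map_span, Set.image_singleton, Ideal.span_le, Set.singleton_subset_iff]
      rw [← AdjoinRoot.algebraMap_eq]
      exact hπP
    have hPeq : (Ideal.span {π}).map (AdjoinRoot.of q) = P := hMmax.eq_of_le hP.ne_top hle
    rw [← hPeq, Ideal.map_span, Set.image_singleton]
    exact ⟨_, rfl⟩

instance : IsPrincipalIdealRing A := IsPrincipalIdealRing.of_prime prime_principal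

def G : MvPolynomial (Fin 2) ℝ :=
  (MvPolynomial.X 0 : MvPolynomial (Fin 2) ℝ) ^ 2 + MvPolynomial.X 1 ^ 2 + 1

def Einner : MvPolynomial (Fin 1) ℝ ≃ₐ[ℝ] B :=
  (MvPolynomial.finSuccEquiv ℝ 0).trans
    (Polynomial.mapAlgEquiv (MvPolynomial.isEmptyAlgEquiv ℝ (Fin 0)))

def E : MvPolynomial (Fin 2) ℝ ≃ₐ[ℝ] Polynomial B :=
  (MvPolynomial.finSuccEquiv ℝ 1).trans (Polynomial.mapAlgEquiv Einner)

lemma hE : E G = q := by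
  have h0 : E (MvPolynomial.X 0) = X := by
    simp [E, coe_mapAlgEquiv, MvPolynomial.finSuccEquiv_X_zero]
  have hinner : Einner (MvPolynomial.X 0) = X := by
    simp [Einner, coe_mapAlgEquiv, MvPolynomial.finSuccEquiv_X_zero]
  have h1 : E (MvPolynomial.X ((0 : Fin 1).succ)) = C X := by
    rw [E, AlgEquiv.trans_apply, MvPolynomial.finSuccEquiv_X_succ]
    simp [coe_mapAlgEquiv, hinner]
  have : E G = X ^ 2 + (C X) ^ 2 + 1 := by
    rw [G, map_add, map_add, map_pow, map_pow, map_one, h0,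
      show (MvPolynomial.X (1 : Fin 2) : MvPolynomial (Fin 2) ℝ)
        = MvPolynomial.X ((0 : Fin 1).succ) from rfl, h1]
  rw [this, show q = X ^ 2 + C cc from rfl, cc, C_add, C_pow, C_1]
  ring

def quotEquiv : (MvPolynomial (Fin 2) ℝ ⧸ Ideal.span {G}) ≃+* A :=
  Ideal.quotientEquiv _ _ E.toRingEquiv (by
    rw [Ideal.map_span, Set.image_singleton]
    exact congrArg (fun z => Ideal.span {z}) hE.symm)

end ConicAux




def R1e : R1 ≃+* ConicAux.A := ConicAux.quotEquiv

instance : IsDomain R1 := R1e.toMulEquiv.isDomain ConicAux.A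

instance : IsPrincipalIdealRing R1 :=
  IsPrincipalIdealRing.of_surjective (R1e.symm : ConicAux.A →+* R1) R1e.symm.surjective


/-- Every finitely generated projective module over
`R₁ = ℝ[X,Y]/(X²+Y²+1)` is free. -/
theorem statement_0 (M : Type) [AddCommGroup M] [Module R1 M]
    [Module.Finite R1 M] [Module.Projective R1 M] : Module.Free R1 M := by
  obtain ⟨s, hs⟩ := Module.projective_def.mp ‹Module.Projective R1 M›
  have hinj : Function.Injective s := hs.injective
  haveI : NoZeroSMulDivisors R1 M := by
    constructor
    intro r m hrm
    by_cases hr : r = 0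
    · exact Or.inl hr
    refine Or.inr ?_
    have h1 : r • s m = 0 := by rw [← map_smul, hrm, map_zero]
    have h2 : s m = 0 := by
      ext i
      have h3 : (r • s m) i = 0 := by rw [h1]; rfl
      rw [Finsupp.smul_apply, smul_eq_mul] at h3
      simpa using (mul_eq_zero.mp h3).resolve_left hr
    exact hinj (h2.trans (map_zero s).symm)
  exact Module.free_of_finite_type_torsion_free'
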